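/- arXiv:2305.02921 — 2 statements merged into one kernel-verified Lean document; each statement's English description precedes it below -/
import Mathlib

section
/- Let I ⊆ M_m be a decreasing monomial set. Then LTA(m,2) preserves the code C(I): for every (B,ε) ∈ LTA(m,2) and every P ∈ R_m with ev(P) ∈ C(I), one has ev((B,ε)·P) ∈ C(I). In particular, for every monomial f ∈ I and every (B,ε) ∈ LTA(m,2), ev((B,ε)·f) ∈ C(I). -/
open Finset Pointwise

/-- Points of the affine space `F_2^m`. -/
abbrev Point (m : ℕ) := Fin m → ZMod 2

/-- The ring `R_m = F_2[x_0,…,x_{m-1}]/(x_i^2 - x_i)`, identified with the ring of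
functions `F_2^m → F_2` via the evaluation isomorphism `ev`. -/
abbrev Fn (m : ℕ) := Point m → ZMod 2

/-- The monomial `∏_{i ∈ S} x_i` (as the function it evaluates to). -/
def monFn (m : ℕ) (S : Finset (Fin m)) : Fn m := fun u => ∏ i ∈ S, u i

/-- Hamming weight of `ev(P)`: the number of points where `P` takes the value 1. -/
def wt (m : ℕ) (P : Fn m) : ℕ := (Finset.univ.filter fun u => P u = 1).card

/-- The monomial code `C(I)`: the `F_2`-span of the evaluations of the monomials in `I`. -/
def code (m : ℕ) (I : Set (Finset (Fin m))) : Submodule (ZMod 2) (Fn m) :=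
  Submodule.span (ZMod 2) (monFn m '' I)

/-- `f ≼_sh g` for monomials of equal degree: the sorted index lists compare entrywise. -/
def shLE (m : ℕ) (S T : Finset (Fin m)) : Prop :=
  S.card = T.card ∧
    ∀ (ℓ : ℕ) (hS : ℓ < (S.sort (· ≤ ·)).length) (hT : ℓ < (T.sort (· ≤ ·)).length),
      (S.sort (· ≤ ·)).get ⟨ℓ, hS⟩ ≤ (T.sort (· ≤ ·)).get ⟨ℓ, hT⟩

/-- `f ≼ g` iff there is a monomial `g*` with `f ≼_sh g* ≼_w g`. -/
def pre (m : ℕ) (S T : Finset (Fin m)) : Prop :=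
  ∃ U : Finset (Fin m), shLE m S U ∧ U ⊆ T

/-- A decreasing set of monomials. -/
def Decreasing (m : ℕ) (I : Set (Finset (Fin m))) : Prop :=
  ∀ f ∈ I, ∀ g : Finset (Fin m), pre m g f → g ∈ I

/-- The affine map `u ↦ B u + ε` on `F_2^m`. -/
def affMap (m : ℕ) (B : Fin m → Fin m → ZMod 2) (ε : Point m) (u : Point m) : Point m :=
  fun i => (∑ j, B i j * u j) + ε i

/-- `B` is lower triangular with unit diagonal. -/
def IsLT (m : ℕ) (B : Fin m → Fin m → ZMod 2) : Prop :=
  (∀ i, B i i = 1) ∧ ∀ i j : Fin m, i < j → B i j = 0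

/-- The action of `(B,ε) ∈ LTA(m,2)` on `R_m`: substitute `x_i ↦ x_i + Σ_{j<i} b_{i,j} x_j + ε_i`.
In the function representation this is precomposition with the affine map. -/
def act (m : ℕ) (B : Fin m → Fin m → ZMod 2) (ε : Point m) (P : Fn m) : Fn m :=
  fun u => P (affMap m B ε u)

/-- The orbit `LTA(m,2)·P`. -/
def orbit (m : ℕ) (P : Fn m) : Set (Fn m) :=
  {Q | ∃ B ε, IsLT m B ∧ Q = act m B ε P}

/-- Membership in the subgroup `LTA(m,2)_g` for the monomial `g` with index set `S`:
`ε_i = 0` if `i ∉ ind(g)`, and `b_{i,j} = 0` (off the diagonal) if `i ∉ ind(g)` or `j ∈ ind(g)`. -/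
def IsLTsub (m : ℕ) (S : Finset (Fin m)) (B : Fin m → Fin m → ZMod 2) (ε : Point m) : Prop :=
  IsLT m B ∧ (∀ i, i ∉ S → ε i = 0) ∧
    ∀ i j : Fin m, j ≠ i → (i ∉ S ∨ j ∈ S) → B i j = 0

/-- The orbit `LTA(m,2)_g · P` where `S = ind(g)`. -/
def orbitSub (m : ℕ) (S : Finset (Fin m)) (P : Fn m) : Set (Fn m) :=
  {Q | ∃ B ε, IsLTsub m S B ε ∧ Q = act m B ε P}

/-- `λ_f(i) = |{j : j < i, j ∉ ind(f)}|` where `S = ind(f)`. -/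
def lam (m : ℕ) (S : Finset (Fin m)) (i : Fin m) : ℕ :=
  (Finset.univ.filter fun j => j < i ∧ j ∉ S).card

/-- `|λ_f(g)| = Σ_{i ∈ ind(g)} λ_f(i)`. -/
def lamSum (m : ℕ) (S T : Finset (Fin m)) : ℕ := ∑ i ∈ T, lam m S i

/-- The affine form `c + Σ_i a_i x_i`. -/
def affForm (m : ℕ) (c : ZMod 2) (a : Point m) : Fn m := fun u => c + ∑ i, a i * u i

/-- `deg(P) ≤ r`: `P` lies in the span of the (multilinear) monomials of degree at most `r`. -/
def degLE (m : ℕ) (P : Fn m) (r : ℕ) : Prop :=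
  P ∈ Submodule.span (ZMod 2)
    {Q : Fn m | ∃ S : Finset (Fin m), S.card ≤ r ∧ Q = monFn m S}



lemma prod_idem {ι β : Type*} [DecidableEq β] (s : Finset ι) (g : ι → β) (v : β → ZMod 2) :
    ∏ i ∈ s, v (g i) = ∏ j ∈ s.image g, v j := by
  classical
  induction s using Finset.induction with
  | empty => simp
  | insert _ _ ha ih =>
    rename_i a s
    rw [Finset.prod_insert ha, Finset.image_insert, ih]
    by_cases h : g a ∈ s.image g
    · rw [Finset.insert_eq_self.2 h, ← Finset.mul_prod_erase _ _ h, ← mul_assoc]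
      congr 1
      have : ∀ x : ZMod 2, x * x = x := by decide
      exact this _
    · rw [Finset.prod_insert h]

lemma sort_mono (m : ℕ) (T : Finset (Fin m)) {k l : ℕ}
    (hk : k < (T.sort (· ≤ ·)).length) (hl : l < (T.sort (· ≤ ·)).length) (hkl : k ≤ l) :
    (T.sort (· ≤ ·))[k] ≤ (T.sort (· ≤ ·))[l] := by
  rcases lt_or_eq_of_le hkl with h | h
  · have := (T.sortedLT_sort).strictMono_get (a := ⟨k, hk⟩) (b := ⟨l, hl⟩) h
    simpa [List.get_eq_getElem] using le_of_lt this
  · subst h; exact le_rfl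

lemma shLE_of_count (m : ℕ) (T U : Finset (Fin m)) (hcard : T.card = U.card)
    (hcnt : ∀ x : Fin m, (U.filter (· ≤ x)).card ≤ (T.filter (· ≤ x)).card) :
    shLE m T U := by
  refine ⟨hcard, ?_⟩
  intro ℓ hT hU
  by_contra hcon
  push_neg at hcon
  simp only [List.get_eq_getElem] at hcon
  set b := (U.sort (· ≤ ·))[ℓ] with hb
  set a := (T.sort (· ≤ ·))[ℓ] with ha
  have h1 : ℓ + 1 ≤ (U.filter (· ≤ b)).card := by
    have hsub : ((U.sort (· ≤ ·)).take (ℓ+1)).toFinset ⊆ U.filter (· ≤ b) := by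
      intro x hx
      rw [List.mem_toFinset, List.mem_iff_getElem] at hx
      obtain ⟨k, hk, hkx⟩ := hx
      have hlen : ((U.sort (· ≤ ·)).take (ℓ+1)).length = ℓ + 1 := by
        rw [List.length_take]; omega
      have hk1 : k < ℓ + 1 := by omega
      have hk' : k < (U.sort (· ≤ ·)).length := by omega
      rw [List.getElem_take] at hkx
      have hmem : x ∈ U := by
        rw [← Finset.mem_sort (α := Fin m) (· ≤ ·), ← hkx]
        exact List.getElem_mem _
      have hxb : x ≤ b := by
        rw [← hkx, hb]
        exact sort_mono m U hk' hU (by omega)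
      simp [hmem, hxb]
    have hnodup : ((U.sort (· ≤ ·)).take (ℓ+1)).Nodup :=
      (U.sort_nodup (· ≤ ·)).sublist (List.take_sublist _ _)
    have hcard' : ((U.sort (· ≤ ·)).take (ℓ+1)).toFinset.card = ℓ + 1 := by
      rw [List.toFinset_card_of_nodup hnodup, List.length_take]; omega
    calc ℓ + 1 = ((U.sort (· ≤ ·)).take (ℓ+1)).toFinset.card := hcard'.symm
      _ ≤ _ := Finset.card_le_card hsub
  have h2 : (T.filter (· ≤ b)).card ≤ ℓ := by
    have hsub : T.filter (· ≤ b) ⊆ ((T.sort (· ≤ ·)).take ℓ).toFinset := by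
      intro t ht
      rw [Finset.mem_filter] at ht
      obtain ⟨htT, htb⟩ := ht
      have hmem : t ∈ T.sort (· ≤ ·) := by rw [Finset.mem_sort]; exact htT
      rw [List.mem_iff_getElem] at hmem
      obtain ⟨k, hk, hkt⟩ := hmem
      have hkℓ : k < ℓ := by
        by_contra hge
        push_neg at hge
        have hle2 : a ≤ t := by
          rw [← hkt, ha]; exact sort_mono m T hT hk hge
        exact lt_irrefl a (lt_of_le_of_lt (hle2.trans htb) hcon)
      rw [List.mem_toFinset, List.mem_iff_getElem]
      refine ⟨k, ?_, ?_⟩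
      · rw [List.length_take]; omega
      · rw [List.getElem_take]; exact hkt
    calc (T.filter (· ≤ b)).card ≤ ((T.sort (· ≤ ·)).take ℓ).toFinset.card :=
          Finset.card_le_card hsub
      _ ≤ ((T.sort (· ≤ ·)).take ℓ).length := List.toFinset_card_le _
      _ ≤ ℓ := by rw [List.length_take]; omega
  have h3 := (h1.trans (hcnt b)).trans h2
  omega

lemma shLE_image (m : ℕ) (T : Finset (Fin m)) (ψ : Fin m → Fin m)
    (hle : ∀ t ∈ T, t ≤ ψ t) (hinj : Set.InjOn ψ T) : shLE m T (T.image ψ) := by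
  classical
  apply shLE_of_count
  · exact (Finset.card_image_of_injOn hinj).symm
  · intro x
    have hsub : (T.image ψ).filter (· ≤ x) ⊆ (T.filter (· ≤ x)).image ψ := by
      intro u hu
      rw [Finset.mem_filter] at hu
      obtain ⟨hmem, hux⟩ := hu
      rw [Finset.mem_image] at hmem
      obtain ⟨t, htT, rfl⟩ := hmem
      exact Finset.mem_image_of_mem _ (Finset.mem_filter.2 ⟨htT, (hle t htT).trans hux⟩)
    calc ((T.image ψ).filter (· ≤ x)).card ≤ ((T.filter (· ≤ x)).image ψ).card :=
          Finset.card_le_card hsub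
      _ ≤ (T.filter (· ≤ x)).card := Finset.card_image_le

lemma mon_act_mem (m : ℕ) (I : Set (Finset (Fin m))) (hdec : Decreasing m I)
    (f : Finset (Fin m)) (hf : f ∈ I) (B : Fin m → Fin m → ZMod 2) (ε : Point m)
    (hB : IsLT m B) : act m B ε (monFn m f) ∈ code m I := by
  classical
  have hexp : act m B ε (monFn m f) =
      ∑ s ∈ f.powerset, ∑ p ∈ s.pi (fun _ => (Finset.univ : Finset (Fin m))),
        ((∏ i ∈ f \ s, ε i) * ∏ i ∈ s.attach, B i.1 (p i.1 i.2)) •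
          monFn m (s.attach.image fun i => p i.1 i.2) := by
    funext u
    simp only [act, monFn, affMap, Finset.sum_apply, Pi.smul_apply, smul_eq_mul]
    rw [Finset.prod_add]
    refine Finset.sum_congr rfl fun s hs => ?_
    rw [Finset.prod_sum, Finset.sum_mul]
    refine Finset.sum_congr rfl fun p hp => ?_
    rw [Finset.prod_mul_distrib,
      prod_idem s.attach (fun i => p i.1 i.2) (fun j => u j)]
    ring
  rw [hexp]
  refine Submodule.sum_mem _ fun s hs => Submodule.sum_mem _ fun p hp => ?_
  rw [Finset.mem_powerset] at hs
  by_cases hz : (∏ i ∈ s.attach, B i.1 (p i.1 i.2)) = 0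
  · rw [hz, mul_zero, zero_smul]
    exact Submodule.zero_mem _
  · refine Submodule.smul_mem _ _ (Submodule.subset_span ?_)
    refine ⟨_, ?_, rfl⟩
    set T := s.attach.image fun i => p i.1 i.2 with hT
    have hple : ∀ (i : Fin m) (hi : i ∈ s), p i hi ≤ i := by
      intro i hi
      have hne : B i (p i hi) ≠ 0 := fun h0 =>
        hz (Finset.prod_eq_zero (Finset.mem_attach s ⟨i, hi⟩) h0)
      by_contra hlt
      push_neg at hlt
      exact hne (hB.2 i _ hlt)
    have hsec : ∀ t ∈ T, ∃ i : Fin m, ∃ hi : i ∈ s, p i hi = t := by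
      intro t ht
      rw [hT, Finset.mem_image] at ht
      obtain ⟨⟨i, hi⟩, _, hpt⟩ := ht
      exact ⟨i, hi, hpt⟩
    choose φ hφ1 hφ2 using hsec
    set ψ : Fin m → Fin m := fun t => if h : t ∈ T then φ t h else t with hψ
    have hψmem : ∀ t ∈ T, ψ t ∈ s := by
      intro t ht; rw [hψ]; simp only [dif_pos ht]; exact hφ1 t ht
    have hψval : ∀ (t : Fin m) (ht : t ∈ T), p (ψ t) (by simpa [hψ, dif_pos ht] using hφ1 t ht) = t := by
      intro t ht
      have := hφ2 t ht
      simp only [hψ, dif_pos ht]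
      exact this
    have hle : ∀ t ∈ T, t ≤ ψ t := by
      intro t ht
      conv_lhs => rw [← hψval t ht]
      exact hple _ _
    have hinj : Set.InjOn ψ T := by
      intro t1 h1 t2 h2 heq
      have e1 := hψval t1 h1
      have e2 := hψval t2 h2
      rw [← e1, ← e2]
      congr 1
    have hsh := shLE_image m T ψ hle hinj
    have hsubf : T.image ψ ⊆ f := by
      intro x hx
      rw [Finset.mem_image] at hx
      obtain ⟨t, ht, rfl⟩ := hx
      exact hs (hψmem t ht)
    exact hdec f hf T ⟨T.image ψ, hsh, hsubf⟩

/-- `LTA(m,2)` preserves a decreasing monomial code; in particular the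
evaluation of the image of any monomial of `I` under any `(B,ε) ∈ LTA(m,2)` is a codeword. -/
theorem stmt17 (m : ℕ) (hm : 1 ≤ m) (I : Set (Finset (Fin m))) (hdec : Decreasing m I) :
    (∀ (B : Fin m → Fin m → ZMod 2) (ε : Point m), IsLT m B →
        ∀ P : Fn m, P ∈ code m I → act m B ε P ∈ code m I) ∧
    (∀ f ∈ I, ∀ (B : Fin m → Fin m → ZMod 2) (ε : Point m), IsLT m B →
        act m B ε (monFn m f) ∈ code m I) := by
  constructor
  · intro B ε hB P hP
    refine Submodule.span_induction ?_ ?_ ?_ ?_ hP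
    · rintro x ⟨g, hg, rfl⟩
      exact mon_act_mem m I hdec g hg B ε hB
    · have : act m B ε (0 : Fn m) = 0 := rfl
      rw [this]; exact Submodule.zero_mem _
    · intro x y _ _ hx hy
      have : act m B ε (x + y) = act m B ε x + act m B ε y := rfl
      rw [this]; exact Submodule.add_mem _ hx hy
    · intro c x _ hx
      have : act m B ε (c • x) = c • act m B ε x := rfl
      rw [this]; exact Submodule.smul_mem _ _ hx
  · intro f hf B ε hB
    exact mon_act_mem m I hdec f hf B ε hB
end

section
/- Let I ⊆ M_m be a nonempty decreasing monomial set with r = max_{f∈I} deg(f) and r ≥ 1. Then every codeword c ∈ C(I) with w(c) = 2^{m−r} can be written as c = ev(y_1⋯y_r) for some r linearly independent affine forms y_1,…,y_r ∈ R_m. -/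
open Finset Pointwise

def D (m r : ℕ) : Submodule (ZMod 2) (Fn m) :=
  Submodule.span (ZMod 2) {Q : Fn m | ∃ S : Finset (Fin m), S.card ≤ r ∧ Q = monFn m S}

lemma z_cases (a : ZMod 2) : a = 0 ∨ a = 1 := by
  have : ∀ a : ZMod 2, a = 0 ∨ a = 1 := by decide
  exact this a
lemma pi_add_self {α : Type*} (x : α → ZMod 2) : x + x = 0 := by
  funext i
  show x i + x i = 0
  have : ∀ a : ZMod 2, a + a = 0 := by decide
  exact this _

def res (n : ℕ) (t : ZMod 2) : Fn (n+1) →ₗ[ZMod 2] Fn n where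
  toFun f := fun u => f (Fin.cons t u)
  map_add' := by intros; rfl
  map_smul' := by intros; rfl

def S' {n : ℕ} (S : Finset (Fin (n+1))) : Finset (Fin n) :=
  Finset.univ.filter (fun i : Fin n => i.succ ∈ S)

lemma res_mon (n : ℕ) (t : ZMod 2) (S : Finset (Fin (n+1))) :
    res n t (monFn (n+1) S) = (if (0 : Fin (n+1)) ∈ S then t else 1) • monFn n (S' S) := by
  funext u
  show (∏ i ∈ S, (Fin.cons t u : Fin (n+1) → ZMod 2) i) = _
  have h1 : (∏ i ∈ S, (Fin.cons t u : Fin (n+1) → ZMod 2) i)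
      = ∏ i : Fin (n+1), (if i ∈ S then (Fin.cons t u : Fin (n+1) → ZMod 2) i else 1) := by
    rw [Finset.prod_ite_mem, Finset.univ_inter]
  rw [h1, Fin.prod_univ_succ]
  simp only [Fin.cons_zero, Fin.cons_succ]
  rw [show (∏ i : Fin n, if i.succ ∈ S then u i else 1) = ∏ i ∈ S' S, u i from
    (Finset.prod_filter _ _).symm]
  rfl

lemma card_S' {n : ℕ} (S : Finset (Fin (n+1))) :
    (S' S).card = if (0 : Fin (n+1)) ∈ S then S.card - 1 else S.card := by
  have hmap : (S' S).map ⟨Fin.succ, Fin.succ_injective n⟩ = S.erase 0 := by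
    ext j
    simp only [Finset.mem_map, Finset.mem_erase, S', Finset.mem_filter, Finset.mem_univ,
      true_and, Function.Embedding.coeFn_mk]
    constructor
    · rintro ⟨i, hi, rfl⟩
      exact ⟨Fin.succ_ne_zero i, hi⟩
    · rintro ⟨hj, hjS⟩
      rcases Fin.eq_succ_of_ne_zero hj with ⟨i, rfl⟩
      exact ⟨i, hjS, rfl⟩
  have := congrArg Finset.card hmap
  rw [Finset.card_map] at this
  rw [this]
  by_cases h0 : (0 : Fin (n+1)) ∈ S
  · rw [if_pos h0, Finset.card_erase_of_mem h0]
  · rw [if_neg h0, Finset.erase_eq_of_notMem h0]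

lemma card_S'_le {n : ℕ} (S : Finset (Fin (n+1))) : (S' S).card ≤ S.card := by
  rw [card_S']; split <;> omega

lemma mon_mem_D {m r : ℕ} (S : Finset (Fin m)) (h : S.card ≤ r) : monFn m S ∈ D m r :=
  Submodule.subset_span ⟨S, h, rfl⟩

lemma res_memD {n r : ℕ} (t : ZMod 2) {f : Fn (n+1)} (hf : f ∈ D (n+1) r) :
    res n t f ∈ D n r := by
  have hle : D (n+1) r ≤ (D n r).comap (res n t) := by
    rw [D]
    apply Submodule.span_le.mpr
    rintro Q ⟨S, hS, rfl⟩
    simp only [SetLike.mem_coe, Submodule.mem_comap]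
    rw [res_mon]
    exact Submodule.smul_mem _ _ (mon_mem_D _ (le_trans (card_S'_le S) hS))
  exact hle hf

lemma sum_res_memD {n r : ℕ} {f : Fn (n+1)} (hf : f ∈ D (n+1) r) :
    res n 0 f + res n 1 f ∈ D n (r-1) := by
  have hle : D (n+1) r ≤ (D n (r-1)).comap (res n 0 + res n 1) := by
    rw [D]
    apply Submodule.span_le.mpr
    rintro Q ⟨S, hS, rfl⟩
    simp only [SetLike.mem_coe, Submodule.mem_comap, LinearMap.add_apply]
    rw [res_mon, res_mon]
    by_cases h0 : (0 : Fin (n+1)) ∈ S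
    · rw [if_pos h0, if_pos h0, zero_smul, zero_add, one_smul]
      apply mon_mem_D
      rw [card_S', if_pos h0]
      omega
    · rw [if_neg h0, if_neg h0, one_smul, pi_add_self]
      exact Submodule.zero_mem _
  exact hle hf

lemma wt_split {n : ℕ} (f : Fn (n+1)) :
    wt (n+1) f = wt n (res n 0 f) + wt n (res n 1 f) := by
  classical
  unfold wt
  rw [Finset.card_filter, Finset.card_filter, Finset.card_filter]
  rw [← Equiv.sum_comp (Fin.consEquiv (fun _ : Fin (n+1) => ZMod 2))
    (fun u => if f u = 1 then 1 else 0)]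
  rw [Fintype.sum_prod_type]
  rw [show (Finset.univ : Finset (ZMod 2)) = {0, 1} from by decide]
  rw [Finset.sum_insert (by decide), Finset.sum_singleton]
  rfl

lemma ne_one_eq_zero {a : ZMod 2} (h : ¬ a = 1) : a = 0 := by
  rcases z_cases a with h0 | h1
  · exact h0
  · exact absurd h1 h

lemma wt_pos {m : ℕ} {f : Fn m} (hf : f ≠ 0) : 1 ≤ wt m f := by
  rw [Nat.one_le_iff_ne_zero]
  intro h
  apply hf
  funext u
  have : u ∉ Finset.univ.filter fun u => f u = 1 := by
    rw [Finset.card_eq_zero.mp h]; exact Finset.notMem_empty u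
  simp only [Finset.mem_filter, Finset.mem_univ, true_and] at this
  exact ne_one_eq_zero this

lemma card_point (m : ℕ) : Fintype.card (Point m) = 2 ^ m := by
  rw [Fintype.card_fun]
  simp

lemma D_zero {m : ℕ} {f : Fn m} (hf : f ∈ D m 0) : f = 0 ∨ f = monFn m ∅ := by
  have hset : {Q : Fn m | ∃ S : Finset (Fin m), S.card ≤ 0 ∧ Q = monFn m S}
      = {monFn m ∅} := by
    ext Q
    simp only [Set.mem_setOf_eq, Set.mem_singleton_iff]
    constructor
    · rintro ⟨S, hS, rfl⟩
      rw [Finset.card_eq_zero.mp (Nat.le_zero.mp hS)]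
    · rintro rfl; exact ⟨∅, le_refl _, rfl⟩
  rw [D, hset, Submodule.mem_span_singleton] at hf
  rcases hf with ⟨c, rfl⟩
  rcases z_cases c with rfl | rfl
  · left; rw [zero_smul]
  · right; rw [one_smul]

lemma mon_empty_apply {m : ℕ} (u : Point m) : monFn m ∅ u = 1 := Finset.prod_empty

lemma wt_mon_empty (m : ℕ) : wt m (monFn m ∅) = 2 ^ m := by
  rw [wt]
  rw [Finset.filter_true_of_mem (fun u _ => mon_empty_apply u)]
  rw [Finset.card_univ, card_point]

-- f u in terms of restrictions
lemma apply_eq_res {n : ℕ} (f : Fn (n+1)) (u : Point (n+1)) (t : ZMod 2) (h : u 0 = t) :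
    f u = res n t f (Fin.tail u) := by
  show f u = f (Fin.cons t (Fin.tail u))
  rw [← h, Fin.cons_self_tail]

lemma wt_sum_le {n : ℕ} (f g : Fn n) : wt n (f + g) ≤ wt n f + wt n g := by
  rw [wt, wt, wt]
  refine le_trans (Finset.card_le_card ?_) (Finset.card_union_le _ _)
  intro u hu
  simp only [Finset.mem_filter, Finset.mem_univ, true_and, Finset.mem_union] at hu ⊢
  by_contra hcon
  push_neg at hcon
  have h1 := ne_one_eq_zero hcon.1
  have h2 := ne_one_eq_zero hcon.2
  have : (f + g) u = 0 := by show f u + g u = 0; rw [h1, h2, add_zero]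
  rw [this] at hu
  exact absurd hu (by decide)

lemma lemA : ∀ m r, r ≤ m → ∀ f : Fn m, f ∈ D m r → f ≠ 0 → 2^(m-r) ≤ wt m f := by
  intro m
  induction m with
  | zero =>
    intro r hr f _ hne
    interval_cases r
    simpa using wt_pos hne
  | succ n ih =>
    intro r hr f hf hne
    rcases Nat.eq_zero_or_pos r with rfl | hrpos
    · rcases D_zero hf with rfl | rfl
      · exact absurd rfl hne
      · rw [wt_mon_empty]; simp
    rcases Nat.lt_or_ge r (n+1) with hrn | hrn
    · -- r ≤ n
      have hrn' : r ≤ n := Nat.lt_succ_iff.mp hrn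
      set f0 := res n 0 f with hf0def
      set f1 := res n 1 f with hf1def
      have hsplit : wt (n+1) f = wt n f0 + wt n f1 := wt_split f
      by_cases hh : f0 + f1 = 0
      · have heq : f1 = f0 := by
          have := congrArg (fun g => g + f0) hh
          simp only [zero_add] at this
          rw [add_comm, ← add_assoc, pi_add_self, zero_add] at this
          exact this
        have hf0ne : f0 ≠ 0 := by
          intro h0
          apply hne
          funext u
          rcases z_cases (u 0) with ht | ht
          · rw [apply_eq_res f u 0 ht, ← hf0def, h0]; rfl
          · rw [apply_eq_res f u 1 ht, ← hf1def, heq, h0]; rfl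
        have hi := ih r hrn' f0 (res_memD 0 hf) hf0ne
        have hpow : 2 ^ (n + 1 - r) = 2 ^ (n - r) + 2 ^ (n - r) := by
          rw [← two_mul, ← pow_succ']
          congr 1
          omega
        rw [hsplit, heq, hpow]
        omega
      · have hmem : f0 + f1 ∈ D n (r - 1) := sum_res_memD hf
        have hAh := ih (r-1) (by omega) _ hmem hh
        have hle : wt n (f0 + f1) ≤ wt n f0 + wt n f1 := wt_sum_le f0 f1
        have heq2 : n - (r-1) = n + 1 - r := by omega
        rw [heq2] at hAh
        rw [hsplit]
        omega
    · -- r = n+1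
      have : n + 1 - r = 0 := by omega
      rw [this]
      simpa using wt_pos hne

lemma wt_zero (n : ℕ) : wt n (0 : Fn n) = 0 := by
  rw [wt, Finset.card_eq_zero, Finset.filter_eq_empty_iff]
  intro u _
  show ¬ (0 : ZMod 2) = 1
  decide

lemma cancel_add {n : ℕ} {f0 f1 : Fn n} (hh : f0 + f1 = 0) : f1 = f0 := by
  have := congrArg (fun g => g + f0) hh
  simp only [zero_add] at this
  rw [add_comm, ← add_assoc, pi_add_self, zero_add] at this
  exact this

lemma pswap {n : ℕ} (x y z : Point n) : x + z + y = x + y + z := by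
  funext i
  exact (by decide : ∀ a b c : ZMod 2, a + c + b = a + b + c) _ _ _

lemma prot {n : ℕ} (x y z : Point n) : y + z + x = x + y + z := by
  funext i
  exact (by decide : ∀ a b c : ZMod 2, b + c + a = a + b + c) _ _ _

lemma psub {n : ℕ} (x y z : Point n) : (x + y + z) + x + y = z := by
  funext i
  exact (by decide : ∀ a b c : ZMod 2, (a + b + c) + a + b = c) _ _ _

lemma lemB : ∀ m, ∀ r ≤ m, ∀ f : Fn m, f ∈ D m r → wt m f = 2^(m-r) →
    ∀ u v w, f u = 1 → f v = 1 → f w = 1 → f (u+v+w) = 1 := by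
  intro m
  induction m with
  | zero =>
    intro r hr f _ _ u v w hu _ _
    rwa [Subsingleton.elim (u+v+w) u]
  | succ n ihB =>
    intro r hr f hf hwt u v w hu hv hw
    rcases Nat.eq_zero_or_pos r with rfl | hrpos
    · -- r = 0 : f is everywhere 1
      have hall : (Finset.univ.filter fun x => f x = 1) = Finset.univ := by
        apply Finset.eq_univ_of_card
        rw [← wt, hwt, card_point]
        norm_num
      have : ∀ x, f x = 1 := by
        intro x
        have := Finset.mem_filter.mp (hall ▸ Finset.mem_univ x)
        exact this.2
      exact this _
    rcases Nat.lt_or_ge r (n+1) with hrn | hrn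
    swap
    · -- r = n+1 : weight one
      have h1 : n + 1 - r = 0 := by omega
      rw [h1, pow_zero] at hwt
      rcases Finset.card_eq_one.mp hwt with ⟨a, ha⟩
      have mem : ∀ x, f x = 1 → x = a := by
        intro x hx
        have : x ∈ Finset.univ.filter fun y => f y = 1 := by
          simp only [Finset.mem_filter, Finset.mem_univ, true_and]; exact hx
        rw [ha, Finset.mem_singleton] at this
        exact this
      rw [mem u hu, mem v hv, mem w hw, pi_add_self, zero_add]
      have : a ∈ Finset.univ.filter fun y => f y = 1 := by
        rw [ha]; exact Finset.mem_singleton_self a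
      exact (Finset.mem_filter.mp this).2
    -- main case : 1 ≤ r ≤ n
    have hrn' : r ≤ n := Nat.lt_succ_iff.mp hrn
    set f0 := res n 0 f with hf0def
    set f1 := res n 1 f with hf1def
    have hsplit : wt (n+1) f = wt n f0 + wt n f1 := wt_split f
    have hsum : wt n f0 + wt n f1 = 2 ^ (n + 1 - r) := by rw [← hsplit, hwt]
    have hpow : 2 ^ (n + 1 - r) = 2 ^ (n - r) + 2 ^ (n - r) := by
      rw [← two_mul, ← pow_succ']
      congr 1
      omega
    have hpow' : n - (r - 1) = n + 1 - r := by omega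
    have mem_char : ∀ x : Point (n+1), f x = 1 →
        (x 0 = 0 ∧ f0 (Fin.tail x) = 1) ∨ (x 0 = 1 ∧ f1 (Fin.tail x) = 1) := by
      intro x hx
      rcases z_cases (x 0) with ht | ht
      · left; exact ⟨ht, by rw [hf0def, ← apply_eq_res f x 0 ht]; exact hx⟩
      · right; exact ⟨ht, by rw [hf1def, ← apply_eq_res f x 1 ht]; exact hx⟩
    have goal_char : ∀ x : Point (n+1),
        ((x 0 = 0 ∧ f0 (Fin.tail x) = 1) ∨ (x 0 = 1 ∧ f1 (Fin.tail x) = 1)) → f x = 1 := by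
      rintro x (⟨hx0, hxt⟩ | ⟨hx0, hxt⟩)
      · rw [apply_eq_res f x 0 hx0]; rw [hf0def] at hxt; exact hxt
      · rw [apply_eq_res f x 1 hx0]; rw [hf1def] at hxt; exact hxt
    have c0 : (u+v+w) 0 = u 0 + v 0 + w 0 := rfl
    have tadd : Fin.tail (u+v+w) = Fin.tail u + Fin.tail v + Fin.tail w := rfl
    by_cases hc0 : f0 = 0
    · -- all support on x 0 = 1
      have hmem1 : f1 ∈ D n (r-1) := by
        have := sum_res_memD hf
        rwa [← hf0def, ← hf1def, hc0, zero_add] at this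
      have hwt1 : wt n f1 = 2 ^ (n - (r-1)) := by
        rw [hpow']
        rw [hc0, wt_zero] at hsum
        omega
      have clos := ihB (r-1) (by omega) f1 hmem1 hwt1
      have memb : ∀ x, f x = 1 → x 0 = 1 ∧ f1 (Fin.tail x) = 1 := by
        intro x hx
        rcases mem_char x hx with ⟨_, hxt⟩ | h
        · rw [hc0] at hxt; simp at hxt
        · exact h
      obtain ⟨hu0, huT⟩ := memb u hu
      obtain ⟨hv0, hvT⟩ := memb v hv
      obtain ⟨hw0, hwT⟩ := memb w hw
      apply goal_char
      right
      constructor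
      · rw [c0, hu0, hv0, hw0]; decide
      · rw [tadd]; exact clos _ _ _ huT hvT hwT
    by_cases hc1 : f1 = 0
    · have hmem0 : f0 ∈ D n (r-1) := by
        have := sum_res_memD hf
        rwa [← hf0def, ← hf1def, hc1, add_zero] at this
      have hwt0 : wt n f0 = 2 ^ (n - (r-1)) := by
        rw [hpow']
        rw [hc1, wt_zero] at hsum
        omega
      have clos := ihB (r-1) (by omega) f0 hmem0 hwt0
      have memb : ∀ x, f x = 1 → x 0 = 0 ∧ f0 (Fin.tail x) = 1 := by
        intro x hx
        rcases mem_char x hx with h | ⟨_, hxt⟩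
        · exact h
        · rw [hc1] at hxt; simp at hxt
      obtain ⟨hu0, huT⟩ := memb u hu
      obtain ⟨hv0, hvT⟩ := memb v hv
      obtain ⟨hw0, hwT⟩ := memb w hw
      apply goal_char
      left
      constructor
      · rw [c0, hu0, hv0, hw0]; decide
      · rw [tadd]; exact clos _ _ _ huT hvT hwT
    -- both halves nonzero
    have hA0 := lemA n r hrn' f0 (res_memD 0 hf) hc0
    have hA1 := lemA n r hrn' f1 (res_memD 1 hf) hc1
    have hwt0 : wt n f0 = 2 ^ (n - r) := by rw [hpow] at hsum; omega
    have hwt1 : wt n f1 = 2 ^ (n - r) := by rw [hpow] at hsum; omega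
    have clos0 := ihB r hrn' f0 (res_memD 0 hf) hwt0
    have clos1 := ihB r hrn' f1 (res_memD 1 hf) hwt1
    by_cases hh : f0 + f1 = 0
    · have heq : f1 = f0 := cancel_add hh
      apply goal_char
      have memb : ∀ x, f x = 1 → f0 (Fin.tail x) = 1 := by
        intro x hx
        rcases mem_char x hx with ⟨_, hxt⟩ | ⟨_, hxt⟩
        · exact hxt
        · rwa [heq] at hxt
      rcases z_cases ((u+v+w) 0) with hs0 | hs0
      · left
        exact ⟨hs0, by rw [tadd]; exact clos0 _ _ _ (memb u hu) (memb v hv) (memb w hw)⟩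
      · right
        exact ⟨hs0, by rw [heq, tadd]; exact clos0 _ _ _ (memb u hu) (memb v hv) (memb w hw)⟩
    -- the interesting case : supports of f0 and f1 are disjoint parallel flats
    have hmemh : f0 + f1 ∈ D n (r-1) := by
      have := sum_res_memD hf
      rwa [← hf0def, ← hf1def] at this
    have hAh := lemA n (r-1) (by omega) _ hmemh hh
    have hle : wt n (f0 + f1) ≤ wt n f0 + wt n f1 := wt_sum_le f0 f1
    have hwth : wt n (f0 + f1) = 2 ^ (n - (r-1)) := by
      rw [hpow'] at hAh ⊢
      omega
    have closh := ihB (r-1) (by omega) _ hmemh hwth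
    -- disjointness
    have disj : ∀ x, f0 x = 1 → f1 x = 1 → False := by
      intro x hx0 hx1
      have hxC : ¬ (f0 + f1) x = 1 := by
        show ¬ (f0 x + f1 x = 1)
        rw [hx0, hx1]; decide
      -- filter counting
      have hsub : (Finset.univ.filter fun y => (f0 + f1) y = 1) ⊆
          ((Finset.univ.filter fun y => f0 y = 1) ∪ (Finset.univ.filter fun y => f1 y = 1)).erase x := by
        intro y hy
        simp only [Finset.mem_filter, Finset.mem_univ, true_and] at hy
        rw [Finset.mem_erase]
        constructor
        · rintro rfl; exact hxC hy
        · simp only [Finset.mem_union, Finset.mem_filter, Finset.mem_univ, true_and]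
          by_contra hcon
          push_neg at hcon
          have h1 := ne_one_eq_zero hcon.1
          have h2 := ne_one_eq_zero hcon.2
          have : (f0 + f1) y = 0 := by show f0 y + f1 y = 0; rw [h1, h2, add_zero]
          rw [this] at hy
          exact absurd hy (by decide)
      have hxmem : x ∈ (Finset.univ.filter fun y => f0 y = 1) ∪ (Finset.univ.filter fun y => f1 y = 1) := by
        simp only [Finset.mem_union, Finset.mem_filter, Finset.mem_univ, true_and]
        exact Or.inl hx0
      have hcard := Finset.card_le_card hsub
      rw [Finset.card_erase_of_mem hxmem] at hcard
      have hcard2 := Finset.card_union_le (Finset.univ.filter fun y => f0 y = 1)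
        (Finset.univ.filter fun y => f1 y = 1)
      have e0 : (Finset.univ.filter fun y => f0 y = 1).card = wt n f0 := rfl
      have e1 : (Finset.univ.filter fun y => f1 y = 1).card = wt n f1 := rfl
      have eh : (Finset.univ.filter fun y => (f0 + f1) y = 1).card = wt n (f0 + f1) := rfl
      rw [e0, e1] at hcard2
      rw [eh] at hcard
      rw [hwt0, hwt1] at hcard2
      rw [hwth, hpow'] at hcard
      rw [hpow] at hcard
      have hpos : 0 < 2 ^ (n - r) := Nat.pow_pos (by norm_num)
      omega
    have cover : ∀ x, (f0 x = 1 ∨ f1 x = 1) → (f0 + f1) x = 1 := by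
      intro x hx
      show f0 x + f1 x = 1
      rcases z_cases (f0 x) with h0 | h0 <;> rcases z_cases (f1 x) with h1 | h1
      · rcases hx with h | h
        · rw [h0] at h; exact absurd h (by decide)
        · rw [h1] at h; exact absurd h (by decide)
      · rw [h0, h1]; decide
      · rw [h0, h1]; decide
      · exact absurd h1 (fun h => disj x h0 h)
    have crossA : ∀ x y z : Point n, f0 x = 1 → f0 y = 1 → f1 z = 1 → f1 (x+y+z) = 1 := by
      intro x y z hx hy hz
      have hs := closh x y z (cover x (Or.inl hx)) (cover y (Or.inl hy)) (cover z (Or.inr hz))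
      have hs' : f0 (x+y+z) + f1 (x+y+z) = 1 := hs
      rcases z_cases (f0 (x+y+z)) with h0 | h0
      · rwa [h0, zero_add] at hs'
      · exfalso
        have := clos0 _ _ _ h0 hx hy
        rw [psub] at this
        exact disj z this hz
    have crossB : ∀ x y z : Point n, f1 x = 1 → f1 y = 1 → f0 z = 1 → f0 (x+y+z) = 1 := by
      intro x y z hx hy hz
      have hs := closh x y z (cover x (Or.inr hx)) (cover y (Or.inr hy)) (cover z (Or.inl hz))
      have hs' : f0 (x+y+z) + f1 (x+y+z) = 1 := hs
      rcases z_cases (f1 (x+y+z)) with h1 | h1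
      · rw [h1, add_zero] at hs'; exact hs'
      · exfalso
        have := clos1 _ _ _ h1 hx hy
        rw [psub] at this
        exact disj z hz this
    apply goal_char
    rcases mem_char u hu with ⟨hu0, huT⟩ | ⟨hu0, huT⟩ <;>
      rcases mem_char v hv with ⟨hv0, hvT⟩ | ⟨hv0, hvT⟩ <;>
      rcases mem_char w hw with ⟨hw0, hwT⟩ | ⟨hw0, hwT⟩
    · left
      refine ⟨by rw [c0, hu0, hv0, hw0]; decide, ?_⟩
      rw [tadd]; exact clos0 _ _ _ huT hvT hwT
    · right
      refine ⟨by rw [c0, hu0, hv0, hw0]; decide, ?_⟩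
      rw [tadd]; exact crossA _ _ _ huT hvT hwT
    · right
      refine ⟨by rw [c0, hu0, hv0, hw0]; decide, ?_⟩
      rw [tadd, ← pswap]; exact crossA _ _ _ huT hwT hvT
    · left
      refine ⟨by rw [c0, hu0, hv0, hw0]; decide, ?_⟩
      rw [tadd, ← prot]; exact crossB _ _ _ hvT hwT huT
    · right
      refine ⟨by rw [c0, hu0, hv0, hw0]; decide, ?_⟩
      rw [tadd, ← prot]; exact crossA _ _ _ hvT hwT huT
    · left
      refine ⟨by rw [c0, hu0, hv0, hw0]; decide, ?_⟩
      rw [tadd, ← pswap]; exact crossB _ _ _ huT hwT hvT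
    · left
      refine ⟨by rw [c0, hu0, hv0, hw0]; decide, ?_⟩
      rw [tadd]; exact crossB _ _ _ huT hvT hwT
    · right
      refine ⟨by rw [c0, hu0, hv0, hw0]; decide, ?_⟩
      rw [tadd]; exact clos1 _ _ _ huT hvT hwT


set_option maxHeartbeats 2000000 in
lemma lemC (m r : ℕ) (hrm : r ≤ m) (f : Fn m)
    (hwt : wt m f = 2 ^ (m - r))
    (hclos : ∀ u v w, f u = 1 → f v = 1 → f w = 1 → f (u+v+w) = 1) :
    ∃ (co : ℕ → ZMod 2) (a : ℕ → Point m),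
      LinearIndependent (ZMod 2) (fun j : Fin r => a j.1) ∧
      f = ∏ j ∈ Finset.range r, affForm m (co j) (a j) := by
  classical
  -- pick a point of the support
  have hpos : 0 < (Finset.univ.filter fun u => f u = 1).card := by
    rw [← wt, hwt]; positivity
  obtain ⟨p, hp⟩ := Finset.card_pos.mp hpos
  have hp1 : f p = 1 := (Finset.mem_filter.mp hp).2
  have zkey : ∀ a b c : ZMod 2, (a + b) + (a + c) + a = a + (b + c) := by decide
  -- the direction space
  have haddmem : ∀ v w : Point m, f (p + v) = 1 → f (p + w) = 1 → f (p + (v + w)) = 1 := by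
    intro v w hv hw
    have h := hclos (p + v) (p + w) p hv hw hp1
    have he : (p + v) + (p + w) + p = p + (v + w) := by
      funext i
      exact zkey _ _ _
    rwa [he] at h
  let V : Submodule (ZMod 2) (Point m) :=
  { carrier := {v | f (p + v) = 1}
    add_mem' := fun {v w} hv hw => haddmem v w hv hw
    zero_mem' := by show f (p + 0) = 1; rwa [add_zero]
    smul_mem' := by
      intro c v hv
      rcases z_cases c with rfl | rfl
      · show f (p + (0 : ZMod 2) • v) = 1
        rw [zero_smul, add_zero]; exact hp1
      · show f (p + (1 : ZMod 2) • v) = 1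
        rwa [one_smul] }
  have hmemV : ∀ u, f u = 1 ↔ u + p ∈ V := by
    intro u
    have he : p + (u + p) = u := by
      funext i
      exact (by decide : ∀ a b : ZMod 2, a + (b + a) = b) _ _
    constructor
    · intro hu; show f (p + (u + p)) = 1; rwa [he]
    · intro hu; have : f (p + (u + p)) = 1 := hu; rwa [he] at this
  -- cardinality and rank of V
  letI : Fintype V := Fintype.ofFinite V
  have hcardV : Fintype.card V = 2 ^ (m - r) := by
    have e : V ≃ {u : Point m // f u = 1} :=
      { toFun := fun v => ⟨p + v.1, by
          have := v.2
          rw [hmemV]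
          have he : (p + v.1) + p = v.1 := by
            funext i
            exact (by decide : ∀ a b : ZMod 2, (a + b) + a = b) _ _
          rwa [he]⟩
        invFun := fun u => ⟨u.1 + p, (hmemV u.1).mp u.2⟩
        left_inv := fun v => by
          ext i
          exact (by decide : ∀ a b : ZMod 2, (a + b) + a = b) _ _
        right_inv := fun u => by
          ext i
          exact (by decide : ∀ a b : ZMod 2, a + (b + a) = b) _ _ }
    rw [Fintype.card_congr e, Fintype.card_subtype, ← wt, hwt]
  have hrankV : Module.finrank (ZMod 2) V = m - r := by
    have h1 := Module.card_eq_pow_finrank (K := ZMod 2) (V := V)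
    rw [hcardV, ZMod.card] at h1
    exact (Nat.pow_right_injective (le_refl 2) h1).symm
  have hrankPt : Module.finrank (ZMod 2) (Point m) = m := Module.finrank_fin_fun (ZMod 2)
  -- the annihilator of V has dimension r
  set W := V.dualAnnihilator with hWdef
  have hrankW : Module.finrank (ZMod 2) W = r := by
    have h2 := Subspace.finrank_add_finrank_dualCoannihilator_eq (V.dualAnnihilator)
    rw [Subspace.dualAnnihilator_dualCoannihilator_eq, hrankV, hrankPt] at h2
    rw [hWdef]
    omega
  -- a basis of W gives the linear forms
  let b : Module.Basis (Fin r) (ZMod 2) W :=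
    (Module.finBasis (ZMod 2) W).reindex (finCongr hrankW)
  let φ : Fin r → Module.Dual (ZMod 2) (Point m) := fun j => (b j : Module.Dual (ZMod 2) (Point m))
  have hφW : ∀ j, φ j ∈ W := fun j => (b j).2
  have hφind : LinearIndependent (ZMod 2) φ :=
    b.linearIndependent.map' W.subtype W.ker_subtype
  have hVchar : ∀ u, u ∈ V ↔ ∀ j, φ j u = 0 := by
    intro u
    constructor
    · intro hu j
      exact (Submodule.mem_dualAnnihilator (φ j)).mp (hφW j) u hu
    · intro h
      have hu : u ∈ W.dualCoannihilator := by
        rw [Submodule.mem_dualCoannihilator]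
        intro ψ hψ
        have hrepr := b.sum_repr ⟨ψ, hψ⟩
        have hrepr' : (∑ j, (b.repr ⟨ψ, hψ⟩) j • φ j) = ψ := by
          have := congrArg (W.subtype) hrepr
          rw [map_sum] at this
          simpa using this
        rw [← hrepr']
        rw [LinearMap.sum_apply]
        apply Finset.sum_eq_zero
        intro j _
        rw [LinearMap.smul_apply, h j, smul_zero]
      rwa [hWdef, Subspace.dualAnnihilator_dualCoannihilator_eq] at hu
  -- coefficient vectors
  let avec : Fin r → Point m := fun j i => φ j (Pi.single i 1)
  have heval : ∀ j u, φ j u = ∑ i, avec j i * u i := by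
    intro j u
    have h1 : ∀ i, u i • Pi.single i (1 : ZMod 2)
        = Pi.single (M := fun _ : Fin m => ZMod 2) i (u i) := by
      intro i
      rw [← Pi.single_smul, smul_eq_mul, mul_one]
    have hu : (∑ i, u i • Pi.single i (1 : ZMod 2)) = u :=
      (Finset.sum_congr rfl (fun i _ => h1 i)).trans (Finset.univ_sum_single u)
    conv_lhs => rw [← hu]
    rw [map_sum]
    apply Finset.sum_congr rfl
    intro i _
    rw [map_smul, smul_eq_mul, mul_comm]
  -- linear independence of the coefficient vectors
  let Θ : Point m →ₗ[ZMod 2] Module.Dual (ZMod 2) (Point m) :=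
    { toFun := fun a => ∑ i, a i • LinearMap.proj i
      map_add' := by
        intro a a'
        apply LinearMap.ext
        intro u
        simp only [LinearMap.sum_apply, LinearMap.smul_apply, LinearMap.proj_apply,
          Pi.add_apply, smul_eq_mul, LinearMap.add_apply, add_mul]
        rw [Finset.sum_add_distrib]
      map_smul' := by
        intro c a
        apply LinearMap.ext
        intro u
        simp only [LinearMap.sum_apply, LinearMap.smul_apply, LinearMap.proj_apply,
          Pi.smul_apply, smul_eq_mul, RingHom.id_apply, Finset.mul_sum, mul_assoc] }
  have hΘ : ∀ a u, Θ a u = ∑ i, a i * u i := by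
    intro a u
    show (∑ i, a i • LinearMap.proj i) u = _
    rw [LinearMap.sum_apply]
    apply Finset.sum_congr rfl
    intro i _
    rw [LinearMap.smul_apply, smul_eq_mul]
    rfl
  have hΘa : ∀ j, Θ (avec j) = φ j := by
    intro j
    apply LinearMap.ext
    intro u
    rw [hΘ, heval]
  have havind : LinearIndependent (ZMod 2) avec := by
    apply LinearIndependent.of_comp Θ
    have : (Θ ∘ avec) = φ := funext hΘa
    rw [this]
    exact hφind
  -- assemble
  refine ⟨fun j => if h : j < r then 1 + φ ⟨j, h⟩ p else 0,
          fun j => if h : j < r then avec ⟨j, h⟩ else 0, ?_, ?_⟩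
  · have : (fun j : Fin r => if h : (j : ℕ) < r then avec ⟨j, h⟩ else 0) = avec := by
      funext j
      rw [dif_pos j.2]
    rw [this]
    exact havind
  · funext u
    have hprod : (∏ j ∈ Finset.range r,
        affForm m (if h : j < r then 1 + φ ⟨j, h⟩ p else 0)
          (if h : j < r then avec ⟨j, h⟩ else 0)) u
        = ∏ j : Fin r, (1 + φ j p + φ j u) := by
      rw [Finset.prod_apply]
      rw [Finset.prod_range (fun j => affForm m (if h : j < r then 1 + φ ⟨j, h⟩ p else 0)
          (if h : j < r then avec ⟨j, h⟩ else 0) u)]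
      apply Finset.prod_congr rfl
      intro j _
      rw [dif_pos j.2, dif_pos j.2]
      show (1 + φ j p) + ∑ i, avec j i * u i = 1 + φ j p + φ j u
      rw [← heval]
    rw [hprod]
    rcases z_cases (f u) with hfu | hfu
    · -- f u = 0 : some linear form differs
      rw [hfu]
      have hne1 : f u ≠ 1 := by rw [hfu]; decide
      have hnot : ¬ (u + p ∈ V) := fun h => hne1 ((hmemV u).mpr h)
      rw [hVchar] at hnot
      push_neg at hnot
      obtain ⟨j, hj⟩ := hnot
      apply (Finset.prod_eq_zero (Finset.mem_univ j) _).symm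
      have hadd : φ j u + φ j p ≠ 0 := by
        rw [← map_add]; exact hj
      have hkey : ∀ x y : ZMod 2, x + y ≠ 0 → 1 + y + x = 0 := by decide
      exact hkey _ _ hadd
    · rw [hfu]
      have hV : u + p ∈ V := (hmemV u).mp hfu
      rw [hVchar] at hV
      have : ∀ j : Fin r, (1 + φ j p + φ j u) = 1 := by
        intro j
        have hadd : φ j u + φ j p = 0 := by
          rw [← map_add]
          exact hV j
        have hkey : ∀ x y : ZMod 2, x + y = 0 → 1 + y + x = 1 := by decide
        exact hkey _ _ hadd
      rw [Finset.prod_congr rfl (fun j _ => this j), Finset.prod_const_one]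


/-- every minimum-weight codeword of a decreasing monomial code is the
evaluation of a product of `r` linearly independent affine forms. -/
theorem stmt18 (m : ℕ) (hm : 1 ≤ m) (I : Set (Finset (Fin m))) (hne : I.Nonempty)
    (hdec : Decreasing m I) (r : ℕ) (hr : 1 ≤ r) (hub : ∀ f ∈ I, f.card ≤ r)
    (hmax : ∃ f ∈ I, f.card = r)
    (c : Fn m) (hc : c ∈ code m I) (hw : wt m c = 2 ^ (m - r)) :
    ∃ (co : ℕ → ZMod 2) (a : ℕ → Point m),
      LinearIndependent (ZMod 2) (fun j : Fin r => a j.1) ∧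
      c = ∏ j ∈ Finset.range r, affForm m (co j) (a j) := by
  
  have hrm : r ≤ m := by
    obtain ⟨f, hfI, hfr⟩ := hmax
    calc r = f.card := hfr.symm
      _ ≤ m := by simpa using Finset.card_le_univ f
  have hcD : c ∈ D m r := by
    have hle : code m I ≤ D m r := by
      rw [code, D]
      apply Submodule.span_le.mpr
      rintro Q ⟨S, hSI, rfl⟩
      exact Submodule.subset_span ⟨S, hub S hSI, rfl⟩
    exact hle hc
  have hclos := lemB m r hrm c hcD hw
  exact lemC m r hrm c hw hclos
end
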